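/- arXiv:1602.02415 — 2 statements merged into one kernel-verified Lean document; each statement's English description precedes it below -/
import Mathlib

section
/- Discrete Poincaré inequality for anisotropic TV: if X ∈ ℂ^{N×N} has zero mean (Σ_{k,j} X_{k,j} = 0), then ‖X‖₂ ≤ ‖X‖_{TV}, where ‖X‖_{TV} = ‖D̃₁X‖₁ + ‖D̃₂X‖₁ with circular finite differences D̃₁, D̃₂. -/
open Finset

/-- Circular finite differences along the first (column) index. -/
def D1 (N : ℕ) [NeZero N] (z : Fin N → Fin N → ℂ) : Fin N → Fin N → ℂ :=
  fun k j => z k j - z (k - 1) j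

/-- Circular finite differences along the second (row) index. -/
def D2 (N : ℕ) [NeZero N] (z : Fin N → Fin N → ℂ) : Fin N → Fin N → ℂ :=
  fun k j => z k j - z k (j - 1)

open Fin.NatCast in
/-- Circular telescoping bound: any difference of two values is bounded by the
full circular total variation. -/
lemma circ_telescope {N : ℕ} [NeZero N] (z : Fin N → ℂ) (a b : Fin N) :
    ‖z a - z b‖ ≤ ∑ i, ‖z i - z (i - 1)‖ := by
  have key : ∀ d : ℕ, ∀ c : Fin N,
      ‖z (c + (d : Fin N)) - z c‖ ≤
        ∑ t ∈ Finset.range d,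
          ‖z (c + (t : Fin N) + 1) - z (c + (t : Fin N))‖ := by
    intro d
    induction d with
    | zero => intro c; simp
    | succ d ih =>
      intro c
      rw [Finset.sum_range_succ]
      have hcast : ((d + 1 : ℕ) : Fin N) = (d : Fin N) + 1 := by push_cast; ring
      calc ‖z (c + ((d + 1 : ℕ) : Fin N)) - z c‖
          ≤ ‖z (c + ((d + 1 : ℕ) : Fin N)) - z (c + (d : Fin N))‖
            + ‖z (c + (d : Fin N)) - z c‖ :=
            norm_sub_le_norm_sub_add_norm_sub _ _ _
        _ ≤ ‖z (c + (d : Fin N) + 1) - z (c + (d : Fin N))‖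
            + ∑ t ∈ Finset.range d,
              ‖z (c + (t : Fin N) + 1) - z (c + (t : Fin N))‖ := by
            rw [hcast, ← add_assoc]
            exact add_le_add_right (ih c) _
        _ = _ := add_comm _ _
  set d : ℕ := (a - b).val with hdd
  have hdlt : d < N := (a - b).isLt
  have ha : a = b + (d : Fin N) := by
    rw [hdd, Fin.cast_val_eq_self]; abel
  have h1 : ‖z a - z b‖ ≤
      ∑ t ∈ Finset.range d,
        ‖z (b + (t : Fin N) + 1) - z (b + (t : Fin N))‖ := by
    rw [ha]; exact key d b
  refine h1.trans ?_
  have hinj : ∀ t ∈ Finset.range d, ∀ t' ∈ Finset.range d,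
      b + (t : Fin N) + 1 = b + (t' : Fin N) + 1 → t = t' := by
    intro t ht t' ht' h
    have h2 : (t : Fin N) = (t' : Fin N) := by
      have := add_right_cancel h
      exact add_left_cancel this
    have hv := congrArg Fin.val h2
    rwa [Fin.val_cast_of_lt (lt_trans (Finset.mem_range.mp ht) hdlt),
      Fin.val_cast_of_lt (lt_trans (Finset.mem_range.mp ht') hdlt)] at hv
  have himg := Finset.sum_image (s := Finset.range d)
    (f := fun i : Fin N => ‖z i - z (i - 1)‖)
    (g := fun t : ℕ => b + (t : Fin N) + 1) hinj
  have hsimp : ∀ t : ℕ, b + (t : Fin N) + 1 - 1 = b + (t : Fin N) := by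
    intro t; abel
  calc ∑ t ∈ Finset.range d,
        ‖z (b + (t : Fin N) + 1) - z (b + (t : Fin N))‖
      = ∑ i ∈ (Finset.range d).image (fun t : ℕ => b + (t : Fin N) + 1),
          ‖z i - z (i - 1)‖ := by
        rw [himg]
        exact Finset.sum_congr rfl fun t _ => by simp [hsimp t]
    _ ≤ ∑ i, ‖z i - z (i - 1)‖ :=
        Finset.sum_le_sum_of_subset_of_nonneg (Finset.subset_univ _)
          (fun i _ _ => by positivity)

/-- Pointwise bound for a zero-mean matrix. -/
lemma pointwise_bound {N : ℕ} [NeZero N] (X : Fin N → Fin N → ℂ)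
    (hmean : ∑ k, ∑ j, X k j = 0) (k j : Fin N) :
    ‖X k j‖ ≤ (∑ i, ‖X i j - X (i - 1) j‖)
      + (∑ k', ∑ i, ‖X k' i - X k' (i - 1)‖) / N := by
  have hNpos : (0:ℝ) < N := Nat.cast_pos.mpr (Nat.pos_of_ne_zero (NeZero.ne N))
  set A : ℝ := ∑ i, ‖X i j - X (i - 1) j‖ with hA
  set S : ℝ := ∑ k', ∑ i, ‖X k' i - X k' (i - 1)‖ with hS
  have hsum : ∑ k' : Fin N, ∑ j' : Fin N, (X k j - X k' j') = (N:ℂ)^2 * X k j := by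
    simp [Finset.sum_sub_distrib, hmean, Finset.card_univ]
    ring
  have h1 : (N:ℝ)^2 * ‖X k j‖
      = ‖∑ k' : Fin N, ∑ j' : Fin N, (X k j - X k' j')‖ := by
    rw [hsum, norm_mul, norm_pow, Complex.norm_natCast]
  have h2 : ‖∑ k' : Fin N, ∑ j' : Fin N, (X k j - X k' j')‖
      ≤ ∑ k' : Fin N, ∑ j' : Fin N, ‖X k j - X k' j'‖ := by
    refine (norm_sum_le _ _).trans ?_
    exact Finset.sum_le_sum fun k' _ => norm_sum_le _ _
  have h3 : ∀ k' j' : Fin N, ‖X k j - X k' j'‖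
      ≤ A + ∑ i, ‖X k' i - X k' (i - 1)‖ := by
    intro k' j'
    calc ‖X k j - X k' j'‖
        ≤ ‖X k j - X k' j‖ + ‖X k' j - X k' j'‖ :=
          norm_sub_le_norm_sub_add_norm_sub _ _ _
      _ ≤ A + ∑ i, ‖X k' i - X k' (i - 1)‖ :=
          add_le_add (circ_telescope (fun i => X i j) k k')
            (circ_telescope (X k') j j')
  have h4 : ∑ k' : Fin N, ∑ j' : Fin N, ‖X k j - X k' j'‖
      ≤ (N:ℝ)^2 * A + (N:ℝ) * S := by
    have : ∑ k' : Fin N, ∑ j' : Fin N, ‖X k j - X k' j'‖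
        ≤ ∑ k' : Fin N, ∑ _j' : Fin N, (A + ∑ i, ‖X k' i - X k' (i - 1)‖) := by
      refine Finset.sum_le_sum fun k' _ => Finset.sum_le_sum fun j' _ => h3 k' j'
    refine this.trans (le_of_eq ?_)
    simp [Finset.sum_add_distrib, Finset.mul_sum, hS, Finset.card_univ]
    ring
  have hmain : (N:ℝ)^2 * ‖X k j‖ ≤ (N:ℝ)^2 * A + (N:ℝ) * S := by
    rw [h1]; exact h2.trans h4
  have hrw : (N:ℝ)^2 * (A + S / N) = (N:ℝ)^2 * A + (N:ℝ) * S := by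
    field_simp
  rw [← mul_le_mul_iff_right₀ (show (0:ℝ) < (N:ℝ)^2 by positivity), hrw]
  exact hmain

/-- Discrete Poincaré inequality for the anisotropic TV seminorm: a zero-mean image satisfies
`‖X‖₂ ≤ ‖X‖_{TV}`. -/
theorem discrete_poincare (N : ℕ) [NeZero N] (X : Fin N → Fin N → ℂ)
    (hmean : ∑ k, ∑ j, X k j = 0) :
    Real.sqrt (∑ k, ∑ j, ‖X k j‖ ^ 2)
      ≤ (∑ k, ∑ j, ‖D1 N X k j‖) + (∑ k, ∑ j, ‖D2 N X k j‖) := by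
  have hNpos : (0:ℝ) < N := Nat.cast_pos.mpr (Nat.pos_of_ne_zero (NeZero.ne N))
  have hNne : (N:ℝ) ≠ 0 := ne_of_gt hNpos
  set A : Fin N → ℝ := fun j => ∑ i, ‖X i j - X (i - 1) j‖ with hAdef
  set B : Fin N → ℝ := fun k => ∑ i, ‖X k i - X k (i - 1)‖ with hBdef
  set TA : ℝ := ∑ j, A j with hTA
  set TB : ℝ := ∑ k, B k with hTB
  have hAnn : ∀ j, 0 ≤ A j := fun j => Finset.sum_nonneg fun i _ => by positivity
  have hBnn : ∀ k, 0 ≤ B k := fun k => Finset.sum_nonneg fun i _ => by positivity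
  have hTAnn : 0 ≤ TA := Finset.sum_nonneg fun j _ => hAnn j
  have hTBnn : 0 ≤ TB := Finset.sum_nonneg fun k _ => hBnn k
  -- pointwise bounds
  have hF : ∀ k j, ‖X k j‖ ≤ A j + TB / N := fun k j =>
    pointwise_bound X hmean k j
  have hG : ∀ k j, ‖X k j‖ ≤ B k + TA / N := by
    intro k j
    have hmean' : ∑ j', ∑ k', (fun a b => X b a) j' k' = 0 := by
      rw [Finset.sum_comm]; exact hmean
    have := pointwise_bound (fun a b => X b a) hmean' j k
    simpa [hTA, hAdef, hBdef] using this
  -- sum of squares bound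
  have hsq : ∑ k, ∑ j, ‖X k j‖ ^ 2 ≤ (TA + TB) ^ 2 := by
    have hptwise : ∀ k j, ‖X k j‖ ^ 2 ≤ (A j + TB / N) * (B k + TA / N) := by
      intro k j
      have hFnn : (0:ℝ) ≤ A j + TB / N := by positivity
      calc ‖X k j‖ ^ 2 = ‖X k j‖ * ‖X k j‖ := sq _
        _ ≤ (A j + TB / N) * (B k + TA / N) :=
          mul_le_mul (hF k j) (hG k j) (norm_nonneg _) hFnn
    calc ∑ k, ∑ j, ‖X k j‖ ^ 2
        ≤ ∑ k, ∑ j, (A j + TB / N) * (B k + TA / N) :=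
          Finset.sum_le_sum fun k _ => Finset.sum_le_sum fun j _ => hptwise k j
      _ = (∑ j, (A j + TB / N)) * (∑ k, (B k + TA / N)) := by
          rw [Finset.sum_mul_sum, Finset.sum_comm]
      _ = (TA + TB) * (TB + TA) := by
          rw [Finset.sum_add_distrib, Finset.sum_add_distrib, Finset.sum_const,
            Finset.sum_const, Finset.card_univ, Fintype.card_fin, nsmul_eq_mul,
            nsmul_eq_mul, mul_div_cancel₀ _ hNne, mul_div_cancel₀ _ hNne, ← hTA, ← hTB]
      _ = (TA + TB) ^ 2 := by ring
  have hgoal : (∑ k, ∑ j, ‖D1 N X k j‖) + (∑ k, ∑ j, ‖D2 N X k j‖)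
      = TA + TB := by
    rw [hTA, hTB]
    exact congrArg₂ (· + ·) Finset.sum_comm rfl
  rw [hgoal]
  calc Real.sqrt (∑ k, ∑ j, ‖X k j‖ ^ 2)
      ≤ Real.sqrt ((TA + TB) ^ 2) := Real.sqrt_le_sqrt hsq
    _ = TA + TB := Real.sqrt_sq (by positivity)
end

section
/- Let x, x̂ ∈ ℂ^{N×N}, h = x̂ − x, and Δ ⊂ {1,…,N}². If ‖D̃₁x̂‖₁ ≤ ‖D̃₁x‖₁ then ‖P_Δ^⊥ D̃₁ h‖₁ ≤ 2‖P_Δ^⊥ D̃₁ x‖₁ + |⟨P_Δ D̃₁ h, sgn(D̃₁ x)⟩|, where sgn is applied entrywise (sgn(0)=0) and P_Δ^⊥ = I − P_Δ. -/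
open Finset

/-- Entrywise sign: `sgn z = z / |z|` for `z ≠ 0` and `sgn 0 = 0`. -/
noncomputable def csgn (z : ℂ) : ℂ := if z = 0 then 0 else z / (‖z‖ : ℂ)

lemma key_ineq (a h : ℂ) :
    ‖a‖ + (h * starRingEnd ℂ (csgn a)).re ≤ ‖a + h‖ := by
  by_cases ha : a = 0
  · simp [ha, csgn]
  · have hcs : starRingEnd ℂ (csgn a) = starRingEnd ℂ a / (‖a‖ : ℂ) := by
      simp [csgn, ha, map_div₀]
    have h1 : ((a + h) * starRingEnd ℂ (csgn a)).re ≤ ‖a + h‖ := by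
      calc ((a + h) * starRingEnd ℂ (csgn a)).re ≤ ‖(a + h) * starRingEnd ℂ (csgn a)‖ :=
            Complex.re_le_norm _
        _ = ‖a + h‖ * ‖csgn a‖ := by
            rw [norm_mul, Complex.norm_conj]
        _ ≤ ‖a + h‖ * 1 := by
            apply mul_le_mul_of_nonneg_left _ (norm_nonneg _)
            simp [csgn, ha, norm_div, div_self (norm_ne_zero_iff.mpr ha)]
        _ = ‖a + h‖ := mul_one _
    have h2 : (a * starRingEnd ℂ (csgn a)).re = ‖a‖ := by
      rw [hcs]
      have : a * (starRingEnd ℂ a / (‖a‖ : ℂ)) =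
          ((‖a‖ : ℝ) : ℂ) := by
        rw [mul_div_assoc', Complex.mul_conj']
        have hne : (‖a‖ : ℂ) ≠ 0 := by
          exact_mod_cast norm_ne_zero_iff.mpr ha
        field_simp
      rw [this, Complex.ofReal_re]
    have := h1
    rw [add_mul, Complex.add_re, h2] at this
    linarith
/-- Cone-type inequality: if `‖D̃₁ x̂‖₁ ≤ ‖D̃₁ x‖₁` then, with `h = x̂ - x`,
`‖P_Δ^⊥ D̃₁ h‖₁ ≤ 2 ‖P_Δ^⊥ D̃₁ x‖₁ + |⟨P_Δ D̃₁ h, sgn (D̃₁ x)⟩|`. -/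
theorem tv_cone_inequality (N : ℕ) [NeZero N] (x xhat : Fin N → Fin N → ℂ)
    (Δ : Finset (Fin N × Fin N))
    (hmin : ∑ k, ∑ j, ‖D1 N xhat k j‖ ≤ ∑ k, ∑ j, ‖D1 N x k j‖) :
    ∑ p ∈ Δᶜ, ‖D1 N (xhat - x) p.1 p.2‖
      ≤ 2 * ∑ p ∈ Δᶜ, ‖D1 N x p.1 p.2‖
        + ‖∑ p ∈ Δ,
            D1 N (xhat - x) p.1 p.2 * starRingEnd ℂ (csgn (D1 N x p.1 p.2))‖ := by
  set a : Fin N × Fin N → ℂ := fun p => D1 N x p.1 p.2 with ha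
  set h : Fin N × Fin N → ℂ := fun p => D1 N (xhat - x) p.1 p.2 with hh
  have hhat : ∀ p : Fin N × Fin N, D1 N xhat p.1 p.2 = a p + h p := by
    intro p; simp only [ha, hh, D1, Pi.sub_apply]; ring
  have hmin' : ∑ p : Fin N × Fin N, ‖a p + h p‖ ≤
      ∑ p : Fin N × Fin N, ‖a p‖ := by
    have heq : ∀ k j : Fin N, a (k, j) + h (k, j) = D1 N xhat k j :=
      fun k j => (hhat (k, j)).symm
    rw [Fintype.sum_prod_type, Fintype.sum_prod_type]
    simp only [heq]
    exact hmin
  set T : ℂ := ∑ p ∈ Δ, h p * starRingEnd ℂ (csgn (a p)) with hT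
  have F1 : ∑ p ∈ Δ, ‖a p‖ + T.re ≤ ∑ p ∈ Δ, ‖a p + h p‖ := by
    rw [hT, Complex.re_sum, ← Finset.sum_add_distrib]
    exact Finset.sum_le_sum fun p _ => key_ineq (a p) (h p)
  have F2 : ∑ p ∈ Δᶜ, ‖h p‖ - ∑ p ∈ Δᶜ, ‖a p‖ ≤
      ∑ p ∈ Δᶜ, ‖a p + h p‖ := by
    rw [← Finset.sum_sub_distrib]
    refine Finset.sum_le_sum fun p _ => ?_
    have h0 := norm_add_le (a p + h p) (-(a p))
    have he : a p + h p + -a p = h p := by ring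
    rw [he, norm_neg] at h0
    linarith
  have F3 : ∑ p ∈ Δ, ‖a p + h p‖ + ∑ p ∈ Δᶜ, ‖a p + h p‖ ≤
      ∑ p ∈ Δ, ‖a p‖ + ∑ p ∈ Δᶜ, ‖a p‖ := by
    rw [Finset.sum_add_sum_compl, Finset.sum_add_sum_compl]
    exact hmin'
  have F4 : -T.re ≤ ‖T‖ := by
    have := Complex.abs_re_le_norm T
    have := neg_abs_le T.re
    linarith
  linarith
end
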